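/- Let M be a symmetric real n×n matrix with M_{ij} ≥ 0 for all i ≠ j, whose associated graph (edges where M_{ij} > 0) is connected. Let S = { u ∈ ℤ^n : u ≠ 0, u_i ≥ 0 for all i, (Mu)_k ≤ 0 for all k }. If S is nonempty, then S has a least element with respect to the componentwise partial order: there exists c ∈ S with c_i ≤ u_i for all u ∈ S and all i. -/
import Mathlib


open Matrix

/-- The set of nonzero nonnegative integer vectors `u` with `(Mu)ₖ ≤ 0` for all `k`. -/
def InS {n : ℕ} (M : Matrix (Fin n) (Fin n) ℝ) (u : Fin n → ℤ) : Prop :=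
  u ≠ 0 ∧ (∀ i, 0 ≤ u i) ∧ ∀ k, ∑ j, M k j * (u j : ℝ) ≤ 0

lemma InS.pos {n : ℕ} {M : Matrix (Fin n) (Fin n) ℝ}
    (hsymm : ∀ i j, M i j = M j i)
    (hoff : ∀ i j, i ≠ j → 0 ≤ M i j)
    (hconn : (SimpleGraph.fromRel fun i j : Fin n => 0 < M i j).Connected)
    {u : Fin n → ℤ} (hu : InS M u) (i : Fin n) : 0 < u i := by
  obtain ⟨hne, hnn, hMu⟩ := hu
  by_contra h
  have hzero : u i = 0 := le_antisymm (not_lt.mp h) (hnn i)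
  set G := (SimpleGraph.fromRel fun i j : Fin n => 0 < M i j) with hG
  have step : ∀ k b, u k = 0 → G.Adj k b → u b = 0 := by
    intro k b hk hadj
    obtain ⟨hkb, hM⟩ := hadj
    have hMkb : 0 < M k b := by
      rcases hM with h' | h'
      · exact h'
      · rwa [hsymm]
    have hterms : ∀ j ∈ Finset.univ, 0 ≤ M k j * (u j : ℝ) := by
      intro j _
      rcases eq_or_ne j k with rfl | hj
      · simp [hk]
      · exact mul_nonneg (hoff k j (Ne.symm hj)) (by exact_mod_cast hnn j)
    have hsum0 : ∑ j, M k j * (u j : ℝ) = 0 :=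
      le_antisymm (hMu k) (Finset.sum_nonneg hterms)
    have hb := (Finset.sum_eq_zero_iff_of_nonneg hterms).mp hsum0 b (Finset.mem_univ b)
    have hub : (u b : ℝ) = 0 := by
      rcases mul_eq_zero.mp hb with h' | h'
      · exact absurd h' hMkb.ne'
      · exact h'
    exact_mod_cast hub
  have walkzero : ∀ {a b : Fin n} (w : G.Walk a b), u a = 0 → u b = 0 := by
    intro a b w
    induction w with
    | nil => exact id
    | cons hadj p ih => intro h0; exact ih (step _ _ h0 hadj)
  obtain ⟨j, hj⟩ := Function.ne_iff.mp hne
  obtain ⟨w⟩ := hconn.preconnected i j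
  exact hj (walkzero w hzero)

lemma InS.min' {n : ℕ} {M : Matrix (Fin n) (Fin n) ℝ}
    (hsymm : ∀ i j, M i j = M j i)
    (hoff : ∀ i j, i ≠ j → 0 ≤ M i j)
    (hconn : (SimpleGraph.fromRel fun i j : Fin n => 0 < M i j).Connected)
    {u v : Fin n → ℤ} (hu : InS M u) (hv : InS M v) :
    InS M (fun i => min (u i) (v i)) := by
  refine ⟨?_, fun i => le_min (hu.2.1 i) (hv.2.1 i), ?_⟩
  · intro h
    obtain ⟨j, hj⟩ := Function.ne_iff.mp hu.1
    have h0 : min (u j) (v j) = 0 := congrFun h j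
    have := lt_min (InS.pos hsymm hoff hconn hu j) (InS.pos hsymm hoff hconn hv j)
    omega
  · intro k
    have key : ∀ w : Fin n → ℤ, InS M w → min (u k) (v k) = w k →
        (∀ j, min (u j) (v j) ≤ w j) →
        ∑ j, M k j * ((min (u j) (v j) : ℤ) : ℝ) ≤ 0 := by
      intro w hw hmk hwle
      have hle : ∑ j, M k j * ((min (u j) (v j) : ℤ) : ℝ) ≤ ∑ j, M k j * (w j : ℝ) := by
        apply Finset.sum_le_sum
        intro j _
        rcases eq_or_ne j k with rfl | hj
        · rw [hmk]
        · apply mul_le_mul_of_nonneg_left _ (hoff k j (Ne.symm hj))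
          exact_mod_cast hwle j
      exact hle.trans (hw.2.2 k)
    rcases le_total (u k) (v k) with h | h
    · exact key u hu (min_eq_left h) (fun j => min_le_left _ _)
    · exact key v hv (min_eq_right h) (fun j => min_le_right _ _)

lemma InS.infS {n : ℕ} {M : Matrix (Fin n) (Fin n) ℝ}
    (hsymm : ∀ i j, M i j = M j i)
    (hoff : ∀ i j, i ≠ j → 0 ≤ M i j)
    (hconn : (SimpleGraph.fromRel fun i j : Fin n => 0 < M i j).Connected)
    (f : Fin n → (Fin n → ℤ)) (hf : ∀ j, InS M (f j))
    (s : Finset (Fin n)) (hs : s.Nonempty) :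
    InS M (fun i => s.inf' hs (fun j => f j i)) := by
  induction hs using Finset.Nonempty.cons_induction with
  | singleton a =>
    have : (fun i => ({a} : Finset (Fin n)).inf' (Finset.singleton_nonempty a)
        (fun j => f j i)) = f a := by
      funext i; simp
    rw [this]; exact hf a
  | cons a s ha hs ih =>
    have heq : (fun i => (Finset.cons a s ha).inf' (Finset.cons_nonempty ha)
        (fun j => f j i)) = fun i => min (f a i) (s.inf' hs (fun j => f j i)) := by
      funext i
      rw [Finset.inf'_cons (H := hs)]
    rw [heq]
    exact InS.min' hsymm hoff hconn (hf a) ih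

theorem stmt2 {n : ℕ} (M : Matrix (Fin n) (Fin n) ℝ)
    (hsymm : ∀ i j, M i j = M j i)
    (hoff : ∀ i j, i ≠ j → 0 ≤ M i j)
    (hconn : (SimpleGraph.fromRel fun i j : Fin n => 0 < M i j).Connected)
    (hne : ∃ u, InS M u) :
    ∃ c, InS M c ∧ ∀ u, InS M u → ∀ i, c i ≤ u i := by
  classical
  obtain ⟨u₀, hu₀⟩ := hne
  have hn : Nonempty (Fin n) := by
    rcases Nat.eq_zero_or_pos n with rfl | h
    · exact absurd (funext fun i => i.elim0) hu₀.1
    · exact ⟨⟨0, h⟩⟩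
  have hex : ∀ i, ∃ m : ℕ, ∃ u, InS M u ∧ u i = (m : ℤ) := fun i =>
    ⟨(u₀ i).toNat, u₀, hu₀, (Int.toNat_of_nonneg (hu₀.2.1 i)).symm⟩
  choose f hfS hfeq using fun i => Nat.find_spec (hex i)
  have hfmin : ∀ i, ∀ u, InS M u → f i i ≤ u i := by
    intro i u hu
    have h1 : Nat.find (hex i) ≤ (u i).toNat :=
      Nat.find_le ⟨u, hu, (Int.toNat_of_nonneg (hu.2.1 i)).symm⟩
    have h2 := Int.toNat_of_nonneg (hu.2.1 i)
    rw [hfeq i]; omega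
  have huniv : (Finset.univ : Finset (Fin n)).Nonempty := Finset.univ_nonempty
  refine ⟨fun i => Finset.univ.inf' huniv (fun j => f j i),
    InS.infS hsymm hoff hconn f hfS _ huniv, ?_⟩
  intro u hu i
  exact (Finset.inf'_le _ (Finset.mem_univ i)).trans (hfmin i u hu)
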